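/- arXiv:2005.07448 — 3 statements merged into one kernel-verified Lean document; each statement's English description precedes it below -/
import Mathlib

section
/- Let X be a Banach space, Y and Z normed spaces, and A : X → Y a continuous injective linear operator. Suppose there exist a constant C̃ ≥ 0 and a compact linear operator K : X → Z such that ‖u‖_X ≤ C̃ (‖A u‖_Y + ‖K u‖_Z) for all u ∈ X. Then A has closed image and there exists a constant C ≥ 0 such that ‖u‖_X ≤ C ‖A u‖_Y for all u ∈ X. -/
/-- **Schauder lemma.** Let `X` be a Banach space, `Y` and `Z` normed spaces and
`A : X → Y` a continuous injective linear operator. Suppose there exist `C̃ ≥ 0` and a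
compact linear operator `K : X → Z` such that `‖u‖ ≤ C̃ (‖A u‖ + ‖K u‖)` for all `u`.
Then `A` has closed image and there exists `C ≥ 0` with `‖u‖ ≤ C ‖A u‖` for all `u`. -/
theorem schauder_lemma {X Y Z : Type*}
    [NormedAddCommGroup X] [NormedSpace ℝ X] [CompleteSpace X]
    [NormedAddCommGroup Y] [NormedSpace ℝ Y]
    [NormedAddCommGroup Z] [NormedSpace ℝ Z]
    (A : X →L[ℝ] Y) (hA : Function.Injective A)
    (K : X →L[ℝ] Z) (hK : IsCompactOperator K)
    (C' : ℝ) (hC' : 0 ≤ C')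
    (h : ∀ u : X, ‖u‖ ≤ C' * (‖A u‖ + ‖K u‖)) :
    IsClosed (Set.range A) ∧ ∃ C : ℝ, 0 ≤ C ∧ ∀ u : X, ‖u‖ ≤ C * ‖A u‖ := by
  have key : ∃ C : ℝ, 0 ≤ C ∧ ∀ u : X, ‖u‖ ≤ C * ‖A u‖ := by
    by_contra hcon
    push_neg at hcon
    -- hcon : ∀ C, 0 ≤ C → ∃ u, C * ‖A u‖ < ‖u‖
    have hseq : ∀ n : ℕ, ∃ v : X, ‖v‖ = 1 ∧ ‖A v‖ < 1 / (n + 1) := by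
      intro n
      obtain ⟨u, hu⟩ := hcon ((n : ℝ) + 1) (by positivity)
      have hu0 : u ≠ 0 := by
        rintro rfl
        simp at hu
      have hunorm : (0 : ℝ) < ‖u‖ := norm_pos_iff.mpr hu0
      refine ⟨‖u‖⁻¹ • u, ?_, ?_⟩
      · rw [norm_smul, norm_inv, norm_norm, inv_mul_cancel₀ hunorm.ne']
      · rw [map_smul, norm_smul, norm_inv, norm_norm, inv_mul_eq_div,
          div_lt_div_iff₀ hunorm (by positivity)]
        nlinarith [norm_nonneg (A u)]
    choose v hv1 hv2 using hseq
    -- K maps the unit ball into a compact set (after closure)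
    obtain ⟨s, hs_compact, hs_sub⟩ :=
      IsCompactOperator.image_closedBall_subset_compact (𝕜₁ := ℝ)
        (f := (K : X →ₛₗ[RingHom.id ℝ] Z)) hK 1
    have hmem : ∀ n, K (v n) ∈ s := by
      intro n
      apply hs_sub
      exact ⟨v n, by simp [Metric.mem_closedBall, dist_zero_right, (hv1 n).le], rfl⟩
    obtain ⟨z, _, φ, hφ, hz⟩ := hs_compact.tendsto_subseq hmem
    set w : ℕ → X := fun n => v (φ n) with hw
    have hAw : Filter.Tendsto (fun n => ‖A (w n)‖) Filter.atTop (nhds 0) := by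
      have h1 : Filter.Tendsto (fun n : ℕ => 1 / ((φ n : ℝ) + 1)) Filter.atTop (nhds 0) := by
        apply tendsto_one_div_add_atTop_nhds_zero_nat.comp
        exact hφ.tendsto_atTop.comp Filter.tendsto_id |>.congr (fun n => rfl)
      refine squeeze_zero (fun n => norm_nonneg _) (fun n => (hv2 (φ n)).le) h1
    have hKcauchy : CauchySeq (fun n => K (w n)) := hz.cauchySeq
    have hwc : CauchySeq w := by
      rw [Metric.cauchySeq_iff]
      intro ε hε
      have hε' : (0 : ℝ) < ε / (3 * (C' + 1)) := by positivity
      obtain ⟨N1, hN1⟩ := (Metric.tendsto_atTop.mp hAw) _ hε'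
      obtain ⟨N2, hN2⟩ := Metric.cauchySeq_iff.mp hKcauchy _ hε'
      refine ⟨max N1 N2, fun m hm n hn => ?_⟩
      have hAm := hN1 m (le_trans (le_max_left _ _) hm)
      have hAn := hN1 n (le_trans (le_max_left _ _) hn)
      rw [Real.dist_eq, abs_sub_lt_iff] at hAm hAn
      have hKmn := hN2 m (le_trans (le_max_right _ _) hm) n (le_trans (le_max_right _ _) hn)
      rw [dist_eq_norm] at hKmn ⊢
      have hest := h (w m - w n)
      have e1 : ‖A (w m - w n)‖ ≤ ‖A (w m)‖ + ‖A (w n)‖ := by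
        rw [map_sub]; exact norm_sub_le _ _
      have e2 : ‖K (w m) - K (w n)‖ < ε / (3 * (C' + 1)) := hKmn
      rw [map_sub, map_sub] at hest
      have hC1 : (0 : ℝ) < C' + 1 := by linarith
      have : ‖w m - w n‖ ≤ C' * (3 * (ε / (3 * (C' + 1)))) := by
        have hsum : ‖A (w m)‖ + ‖A (w n)‖ + ‖K (w m) - K (w n)‖ ≤ 3 * (ε / (3 * (C' + 1))) := by
          linarith
        calc ‖w m - w n‖ ≤ C' * (‖A (w m) - A (w n)‖ + ‖K (w m) - K (w n)‖) := hest
          _ ≤ C' * (‖A (w m)‖ + ‖A (w n)‖ + ‖K (w m) - K (w n)‖) := by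
              apply mul_le_mul_of_nonneg_left _ hC'
              linarith [norm_sub_le (A (w m)) (A (w n))]
          _ ≤ C' * (3 * (ε / (3 * (C' + 1)))) := mul_le_mul_of_nonneg_left hsum hC'
      calc ‖w m - w n‖ ≤ C' * (3 * (ε / (3 * (C' + 1)))) := this
        _ < (C' + 1) * (3 * (ε / (3 * (C' + 1)))) := by
            apply mul_lt_mul_of_pos_right (by linarith) (by positivity)
        _ = ε := by field_simp
    obtain ⟨x, hx⟩ := cauchySeq_tendsto_of_complete hwc
    have hxnorm : ‖x‖ = 1 := by
      have := ((continuous_norm).tendsto x).comp hx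
      have h1 : Filter.Tendsto (fun n => ‖w n‖) Filter.atTop (nhds ‖x‖) := this
      have h2 : Filter.Tendsto (fun n => ‖w n‖) Filter.atTop (nhds 1) := by
        simpa [hw, hv1] using tendsto_const_nhds (α := ℕ) (f := Filter.atTop) (a := (1:ℝ))
      exact tendsto_nhds_unique h1 h2
    have hAx : A x = 0 := by
      have h1 : Filter.Tendsto (fun n => A (w n)) Filter.atTop (nhds (A x)) :=
        (A.continuous.tendsto x).comp hx
      have h2 : Filter.Tendsto (fun n => A (w n)) Filter.atTop (nhds 0) := by
        rw [tendsto_zero_iff_norm_tendsto_zero]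
        exact hAw
      exact tendsto_nhds_unique h1 h2
    have : x = 0 := hA (by rw [hAx, map_zero])
    rw [this, norm_zero] at hxnorm
    norm_num at hxnorm
  obtain ⟨C, hC0, hC⟩ := key
  refine ⟨?_, C, hC0, hC⟩
  have hanti : AntilipschitzWith C.toNNReal A := by
    apply A.antilipschitz_of_bound
    intro x
    rw [Real.coe_toNNReal C hC0]; exact hC x
  exact hanti.isClosed_range A.uniformContinuous
end

section
/- Let γ : 𝕋 → ℝᵐ be a C¹ immersed closed curve with unit tangent τ_γ = γ'/|γ'|, line element dℓ_γ = |γ'(x)| dx, geodesic distance ρ_γ, and for x ≠ y let I be the shorter arc joining x to y. Then 2 ρ_γ(x,y)² − 2 |γ(x) − γ(y)|² = ∫_{I×I} |τ_γ(s) − τ_γ(t)|² dℓ_γ(s) dℓ_γ(t). -/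
/-!
Expanding the square of a difference of unit vectors gives, pointwise,
`‖τ(s) − τ(t)‖² |γ'(s)| |γ'(t)| = 2 |γ'(s)| |γ'(t)| − 2 ⟪γ'(s), γ'(t)⟫`.
Integrating over the square, the two terms factor into `(∫ |γ'|)² = ρ²` and `‖∫ γ'‖² = |γ(y) − γ(x)|²`.
-/

open MeasureTheory intervalIntegral

section
variable {E : Type*} [NormedAddCommGroup E] [InnerProductSpace ℝ E]

theorem norm_sub_inv_norm_smul_sq_mul (a b : E) :
    ‖‖a‖⁻¹ • a - ‖b‖⁻¹ • b‖ ^ 2 * (‖a‖ * ‖b‖) = 2 * (‖a‖ * ‖b‖) - 2 * inner ℝ a b := by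
  rcases eq_or_ne a 0 with rfl | ha
  · simp
  rcases eq_or_ne b 0 with rfl | hb
  · simp
  rw [norm_sub_sq_real, real_inner_smul_left, real_inner_smul_right, norm_smul, norm_smul,
    norm_inv, norm_inv, norm_norm, norm_norm]
  field_simp
  ring

variable {v : ℝ → E} {a b : ℝ}

theorem IntervalIntegrable.const_inner (c : E) (hv : IntervalIntegrable v volume a b) :
    IntervalIntegrable (fun t => inner ℝ c (v t)) volume a b :=
  ⟨hv.1.const_inner c, hv.2.const_inner c⟩

variable [CompleteSpace E]

theorem intervalIntegral.integral_inner (hv : IntervalIntegrable v volume a b) (c : E) :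
    ∫ t in a..b, inner ℝ c (v t) = inner ℝ c (∫ t in a..b, v t) :=
  (innerSL ℝ c).intervalIntegral_comp_comm hv

theorem intervalIntegral.integral_integral_norm_sub_inv_norm_smul_sq_mul
    (hv : IntervalIntegrable v volume a b) :
    ∫ s in a..b, ∫ t in a..b, ‖‖v s‖⁻¹ • v s - ‖v t‖⁻¹ • v t‖ ^ 2 * (‖v s‖ * ‖v t‖) =
      2 * (∫ t in a..b, ‖v t‖) ^ 2 - 2 * ‖∫ t in a..b, v t‖ ^ 2 := by
  set L := ∫ t in a..b, ‖v t‖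
  set V := ∫ t in a..b, v t
  have h_inner (s : ℝ) :
      ∫ t in a..b, ‖‖v s‖⁻¹ • v s - ‖v t‖⁻¹ • v t‖ ^ 2 * (‖v s‖ * ‖v t‖) =
        2 * ‖v s‖ * L - 2 * inner ℝ V (v s) := by
    simp_rw [norm_sub_inv_norm_smul_sq_mul, ← mul_assoc]
    rw [integral_sub (hv.norm.const_mul _) ((hv.const_inner _).const_mul _),
      integral_const_mul, integral_const_mul, integral_inner hv, real_inner_comm]
  simp_rw [h_inner]
  rw [integral_sub ((hv.norm.const_mul _).mul_const _) ((hv.const_inner _).const_mul _),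
    integral_mul_const, integral_const_mul, integral_const_mul, integral_inner hv,
    real_inner_self_eq_norm_sq]
  ring

end

theorem tangent_polarization_identity_general {m : ℕ}
    (γ γ' : ℝ → EuclideanSpace ℝ (Fin m))
    (hderiv : ∀ t, HasDerivAt γ (γ' t) t)
    (hcont : Continuous γ')
    (x y : ℝ) :
    2 * (∫ s in x..y, ‖γ' s‖) ^ 2 - 2 * ‖γ x - γ y‖ ^ 2 =
      ∫ s in x..y, ∫ t in x..y,
        ‖(‖γ' s‖)⁻¹ • γ' s - (‖γ' t‖)⁻¹ • γ' t‖ ^ 2 * (‖γ' s‖ * ‖γ' t‖) := by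
  have hint := hcont.intervalIntegrable (μ := volume) x y
  rw [integral_integral_norm_sub_inv_norm_smul_sq_mul hint,
    integral_eq_sub_of_hasDerivAt (fun t _ => hderiv t) hint, norm_sub_rev]

/-- **Arc identity.** Let `γ` be a `C¹` immersed curve with unit tangent
`τ_γ = γ'/|γ'|`, let `ρ` be the arclength of the (shorter) arc joining the parameters
`x ≤ y` (here realized as the interval `[x,y]`).  Then
`2 ρ² − 2 |γ(x) − γ(y)|² = ∫_{I×I} |τ_γ(s) − τ_γ(t)|² dℓ_γ(s) dℓ_γ(t)`. -/
theorem tangent_polarization_identity {m : ℕ}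
    (γ γ' : ℝ → EuclideanSpace ℝ (Fin m))
    (hderiv : ∀ t, HasDerivAt γ (γ' t) t)
    (hcont : Continuous γ')
    (himm : ∀ t, γ' t ≠ 0)
    (x y : ℝ) (hxy : x ≤ y) :
    2 * (∫ s in x..y, ‖γ' s‖) ^ 2 - 2 * ‖γ x - γ y‖ ^ 2 =
      ∫ s in x..y, ∫ t in x..y,
        ‖(‖γ' s‖)⁻¹ • γ' s - (‖γ' t‖)⁻¹ • γ' t‖ ^ 2 * (‖γ' s‖ * ‖γ' t‖) :=
  tangent_polarization_identity_general γ γ' hderiv hcont x y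
end

section
/- Let H be a Hilbert space with Riesz isomorphism I : H → H', let Φ : H → N be a surjective bounded linear operator onto a Hilbert space N with Riesz isomorphism I_N, and let η ∈ H'. Then the saddle point system: I u + Φ' λ = η, Φ u = 0 (where Φ' : N' → H' is the dual map and λ ∈ N') has a unique solution (u, λ), and u is the I-orthogonal projection onto ker(Φ) of the gradient I⁻¹ η; i.e., u satisfies ⟨η, w⟩ = ⟨I u, w⟩ for all w ∈ ker(Φ). -/
/-!
Representing `η` by `y ∈ H`, the first equation says `u + Φ† λ = y`. For surjective `Φ` the
open mapping theorem gives `range Φ† = (ker Φ)ᗮ`, and `Φ†` is injective. So `H = ker Φ ⊕ range Φ†`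
is the orthogonal decomposition in which `y` must be split: `u` is the orthogonal projection of `y`
onto `ker Φ` and `λ` is the unique preimage of the remainder under `Φ†`.
-/

open ContinuousLinearMap

open scoped InnerProductSpace

theorem ContinuousLinearMap.exists_comp_eq_of_ker_le {𝕜 E F G : Type*} [NontriviallyNormedField 𝕜]
    [NormedAddCommGroup E] [NormedSpace 𝕜 E] [CompleteSpace E]
    [NormedAddCommGroup F] [NormedSpace 𝕜 F] [CompleteSpace F]
    [NormedAddCommGroup G] [NormedSpace 𝕜 G]
    (f : E →L[𝕜] F) (hf : Function.Surjective f) (ℓ : E →L[𝕜] G) (hℓ : f.ker ≤ ℓ.ker) :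
    ∃ g : F →L[𝕜] G, g ∘L f = ℓ := by
  let g : F →ₗ[𝕜] G :=
    (f.ker.liftQ (ℓ : E →ₗ[𝕜] G) hℓ).comp
      ((f : E →ₗ[𝕜] F).quotKerEquivOfSurjective hf).symm.toLinearMap
  have hgf (x : E) : g (f x) = ℓ x := by
    have := LinearMap.quotKerEquivOfSurjective_symm_apply (f := (f : E →ₗ[𝕜] F)) hf x
    simp only [coe_coe] at this
    simp only [g, LinearMap.comp_apply, LinearEquiv.coe_coe, this, Submodule.liftQ_apply, coe_coe]
  -- `f` is open by the open mapping theorem, hence a quotient map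
  have hcont : Continuous g :=
    (f.isQuotientMap hf).continuous_iff.mpr (by simpa [Function.comp_def, hgf] using ℓ.continuous)
  exact ⟨⟨g, hcont⟩, ext hgf⟩

section Hilbert

variable {H N : Type*} [NormedAddCommGroup H] [InnerProductSpace ℝ H] [CompleteSpace H]
  [NormedAddCommGroup N] [InnerProductSpace ℝ N] [CompleteSpace N]

namespace ContinuousLinearMap

theorem range_adjoint_le_orthogonal_ker (Φ : H →L[ℝ] N) : (adjoint Φ).range ≤ Φ.kerᗮ := by
  simpa [orthogonal_range] using (adjoint Φ).range.le_orthogonal_orthogonal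

theorem range_adjoint_eq_orthogonal_ker {Φ : H →L[ℝ] N} (hΦ : Function.Surjective Φ) :
    (adjoint Φ).range = Φ.kerᗮ := by
  refine le_antisymm Φ.range_adjoint_le_orthogonal_ker fun v hv => ?_
  obtain ⟨g, hg⟩ := Φ.exists_comp_eq_of_ker_le hΦ (InnerProductSpace.toDual ℝ H v) fun w hw => by
    simpa [real_inner_comm] using Submodule.inner_right_of_mem_orthogonal hw hv
  refine ⟨(InnerProductSpace.toDual ℝ N).symm g, ext_inner_right ℝ fun w => ?_⟩
  simpa [adjoint_inner_left] using congr($hg w)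

theorem adjoint_injective {Φ : H →L[ℝ] N} (hΦ : Function.Surjective Φ) :
    Function.Injective (adjoint Φ) := by
  have hker : (adjoint Φ).ker = ⊥ := by
    rw [← orthogonal_range, LinearMap.range_eq_top.mpr hΦ, Submodule.top_orthogonal_eq_bot]
  exact LinearMap.ker_eq_bot.mp hker

theorem forall_inner_add_inner_apply_eq_iff (Φ : H →L[ℝ] N) (η : StrongDual ℝ H) (u : H) (ν : N) :
    (∀ w, ⟪u, w⟫_ℝ + ⟪ν, Φ w⟫_ℝ = η w) ↔
      u + adjoint Φ ν = (InnerProductSpace.toDual ℝ H).symm η := by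
  simp_rw [← adjoint_inner_left, ← inner_add_left, ← InnerProductSpace.toDual_symm_apply (y := η)]
  exact ⟨ext_inner_right ℝ, fun h w => by rw [h]⟩

theorem existsUnique_add_adjoint_eq {Φ : H →L[ℝ] N} (hΦ : Function.Surjective Φ) (y : H) :
    ∃! p : H × N, p.1 + adjoint Φ p.2 = y ∧ Φ p.1 = 0 := by
  have : CompleteSpace Φ.ker := Φ.isClosed_ker.completeSpace_coe
  obtain ⟨ν, hν : adjoint Φ ν = y - Φ.ker.starProjection y⟩ :=
    (range_adjoint_eq_orthogonal_ker hΦ).ge (Φ.ker.sub_starProjection_mem_orthogonal y)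
  refine ⟨(Φ.ker.starProjection y, ν),
    ⟨by rw [hν, add_sub_cancel], Φ.ker.starProjection_apply_mem y⟩, ?_⟩
  rintro ⟨u, μ⟩ ⟨hsum : u + adjoint Φ μ = y, hu : Φ u = 0⟩
  have hu_eq : Φ.ker.starProjection y = u :=
    Φ.ker.eq_starProjection_of_mem_orthogonal hu
      (Φ.range_adjoint_le_orthogonal_ker ⟨μ, eq_sub_of_add_eq' hsum⟩)
  have hμ : adjoint Φ μ = adjoint Φ ν := by
    rw [hν, hu_eq]
    exact eq_sub_of_add_eq' hsum
  simp [← hu_eq, adjoint_injective hΦ hμ]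

end ContinuousLinearMap

end Hilbert

/-- **Saddle point system for the projected gradient (Hilbert setting).** Let `H`, `N`
be Hilbert spaces (with Riesz isomorphisms realized by the inner products), let
`Φ : H → N` be a surjective bounded linear operator and `η ∈ H'`.  Then the saddle
point system `I u + Φ' λ = η`, `Φ u = 0` (with `λ ∈ N'` represented by an element of
`N`) has a unique solution `(u, λ)`, and `u` is the `I`-orthogonal projection of the
gradient onto `ker Φ`, i.e. `⟨η, w⟩ = ⟨I u, w⟩` for all `w ∈ ker Φ`. -/
theorem saddle_point_projected_gradient {H N : Type*}
    [NormedAddCommGroup H] [InnerProductSpace ℝ H] [CompleteSpace H]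
    [NormedAddCommGroup N] [InnerProductSpace ℝ N] [CompleteSpace N]
    (Φ : H →L[ℝ] N) (hΦ : Function.Surjective Φ)
    (η : StrongDual ℝ H) :
    ∃! p : H × N,
      (∀ w : H, (inner ℝ p.1 w : ℝ) + (inner ℝ p.2 (Φ w) : ℝ) = η w) ∧
      Φ p.1 = 0 ∧
      (∀ w ∈ LinearMap.ker (Φ : H →ₗ[ℝ] N), η w = (inner ℝ p.1 w : ℝ)) := by
  refine (existsUnique_congr fun p => ?_).mpr
    (existsUnique_add_adjoint_eq hΦ ((InnerProductSpace.toDual ℝ H).symm η))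
  rw [← forall_inner_add_inner_apply_eq_iff]
  refine ⟨fun ⟨hsys, hker, _⟩ => ⟨hsys, hker⟩, fun ⟨hsys, hker⟩ => ⟨hsys, hker, fun w hw => ?_⟩⟩
  have hΦw : Φ w = 0 := hw
  simpa [hΦw] using (hsys w).symm
end
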